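/- arXiv:1907.07556 — 2 statements merged into one kernel-verified Lean document; each statement's English description precedes it below -/
import Mathlib

section
/- With $T$ as the Shapley max-min reachability operator on $[0,1]^S$ (defined over mixed strategies on finite action sets with transition kernel $Pr$), any two fixed points $v, v'$ of $T$ that both arise as satisfaction-probability vectors of Stackelberg equilibria satisfy $v = v'$, provided that for each fixed stationary control policy $\mu$ the operator $T_\mu v (s) = \min_\tau \sum_{a,b,s'} \mu(s,a)\tau(b) Pr(s,a,b,s') v(s')$ satisfies $\lim_{k\to\infty} T_\mu^k v = v_\mu$ (the value of the induced MDP) and $T_\mu v \le T v$ for all $v$. -/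
/-- Uniqueness of the equilibrium satisfaction-probability vector (Lemma 1): if `v`
and `v'` are fixed points of the max-min operator `T` arising from Stackelberg
equilibrium policies `μ`, `μ'` (so that the induced-MDP operators `T_μ`, `T_μ'` are
monotone, dominated by `T`, and their iterates converge to `v`, `v'` respectively
from any initial vector), then `v = v'`. -/
theorem stmt_13 {S : Type*} [Fintype S] {M : Type*}
    (T : (S → ℝ) → (S → ℝ)) (Tp : M → (S → ℝ) → (S → ℝ))
    (hle : ∀ (μ : M) (w : S → ℝ) (s : S), Tp μ w s ≤ T w s)
    (hmono : ∀ (μ : M) (w w' : S → ℝ), (∀ s, w s ≤ w' s) → ∀ s, Tp μ w s ≤ Tp μ w' s)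
    (v v' : S → ℝ) (μ μ' : M)
    (hfix : T v = v) (hfix' : T v' = v')
    (hlim : ∀ w : S → ℝ, ∀ s,
      Filter.Tendsto (fun k => (Tp μ)^[k] w s) Filter.atTop (nhds (v s)))
    (hlim' : ∀ w : S → ℝ, ∀ s,
      Filter.Tendsto (fun k => (Tp μ')^[k] w s) Filter.atTop (nhds (v' s))) :
    v = v' := by
  have key : ∀ (ν : M) (u : S → ℝ), T u = u → ∀ k s, (Tp ν)^[k] u s ≤ u s := by
    intro ν u hu k
    induction k with
    | zero => intro s; simp
    | succ k ih =>
      intro s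
      rw [Function.iterate_succ_apply']
      calc Tp ν ((Tp ν)^[k] u) s ≤ Tp ν u s := hmono ν _ _ ih s
        _ ≤ T u s := hle ν u s
        _ = u s := by rw [hu]
  have h1 : ∀ s, v' s ≤ v s := fun s =>
    le_of_tendsto (hlim' v s) (Filter.Eventually.of_forall fun k => key μ' v hfix k s)
  have h2 : ∀ s, v s ≤ v' s := fun s =>
    le_of_tendsto (hlim v' s) (Filter.Eventually.of_forall fun k => key μ v' hfix' k s)
  funext s
  exact le_antisymm (h2 s) (h1 s)
end

section
/- Let $P$ be the transition matrix of a finite irreducible Markov chain, let $g \in \mathbb{R}^n$ be a cost vector, and fix a state $s^\ast$. Define $\xi(s)$ as the expected total cost accumulated until the first visit to $s^\ast$ starting from $s$ (with $\xi(s^\ast)$ the expected cost of a full return cycle), and $o(s)$ as the expected number of steps until first visiting $s^\ast$ from $s$ (with $o(s^\ast)$ the expected return time). Setting $\zeta = \xi(s^\ast)/o(s^\ast)$ and $b(s) = \xi(s) - \zeta \, o(s)$, the pair $(\zeta, b)$ satisfies the average-cost optimality equation $\zeta + b(s) = g(s) + \sum_{s'} P(s,s') b(s')$ for every state $s$. 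-/
/-!
The first-passage equations are linear in the unknown, so `b = ξ - ζ o` solves the one with
cost `g - ζ`. The choice of `ζ` makes `b s* = 0`, so the term `P(s, s*) b(s*)` omitted from the
first-passage sum vanishes and that sum is the full one `∑ s', P s s' * b s'`.
-/

open Finset

variable {ι R : Type*} [Fintype ι] [DecidableEq ι]

theorem firstPassage_sub_mul [CommRing R] (P : Matrix ι ι R) (s₀ : ι) (g ξ o : ι → R) (ζ : R)
    (hξ : ∀ s, ξ s = g s + ∑ k ∈ univ.erase s₀, P s k * ξ k)
    (ho : ∀ s, o s = 1 + ∑ k ∈ univ.erase s₀, P s k * o k) (s : ι) :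
    ξ s - ζ * o s = g s - ζ + ∑ k ∈ univ.erase s₀, P s k * (ξ k - ζ * o k) := by
  simp only [mul_sub, sum_sub_distrib, mul_left_comm (P s _) ζ, ← mul_sum]
  linear_combination hξ s - ζ * ho s

theorem firstPassage_eq_full_of_eq_zero [CommRing R] (P : Matrix ι ι R) (s₀ : ι) (c v : ι → R)
    (hv : ∀ s, v s = c s + ∑ k ∈ univ.erase s₀, P s k * v k) (hv₀ : v s₀ = 0) (s : ι) :
    v s = c s + ∑ k, P s k * v k := by
  rw [hv s, sum_erase _ (by rw [hv₀, mul_zero])]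

theorem stmt_16_general {n : ℕ} (P : Matrix (Fin n) (Fin n) ℝ)
    (g : Fin n → ℝ) (sstar : Fin n) (ξ o : Fin n → ℝ)
    (hξ : ∀ s, ξ s = g s + ∑ k ∈ Finset.univ.erase sstar, P s k * ξ k)
    (ho : ∀ s, o s = 1 + ∑ k ∈ Finset.univ.erase sstar, P s k * o k)
    (hopos : 0 < o sstar)
    (ζ : ℝ) (hζ : ζ = ξ sstar / o sstar)
    (b : Fin n → ℝ) (hb : ∀ s, b s = ξ s - ζ * o s) :
    ∀ s, ζ + b s = g s + ∑ s', P s s' * b s' := by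
  intro s
  have hb_star : b sstar = 0 := by
    rw [hb sstar, hζ, div_mul_cancel₀ _ hopos.ne', sub_self]
  have hb_passage (s : Fin n) : b s = g s - ζ + ∑ k ∈ univ.erase sstar, P s k * b k := by
    simpa only [hb] using firstPassage_sub_mul P sstar g ξ o ζ hξ ho s
  rw [firstPassage_eq_full_of_eq_zero P sstar _ b hb_passage hb_star s]
  ring

/-- Gain-bias characterization for the average-cost-per-stage problem (Lemma 2): if
`ξ` and `o` satisfy the first-passage cost and time equations with respect to a
distinguished state `s*` of a finite irreducible Markov chain with transition matrix
`P` and cost `g`, then `ζ = ξ(s*)/o(s*)` and `b(s) = ξ(s) - ζ o(s)` satisfy the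
average-cost optimality equation `ζ + b(s) = g(s) + ∑_{s'} P(s,s') b(s')`. -/
theorem stmt_16 {n : ℕ} (P : Matrix (Fin n) (Fin n) ℝ)
    (hPnn : ∀ i j, 0 ≤ P i j) (hProw : ∀ i, ∑ j, P i j = 1)
    (hirr : ∀ i j, ∃ t : ℕ, 0 < (P ^ t) i j)
    (g : Fin n → ℝ) (sstar : Fin n) (ξ o : Fin n → ℝ)
    (hξ : ∀ s, ξ s = g s + ∑ k ∈ Finset.univ.erase sstar, P s k * ξ k)
    (ho : ∀ s, o s = 1 + ∑ k ∈ Finset.univ.erase sstar, P s k * o k)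
    (hopos : 0 < o sstar)
    (ζ : ℝ) (hζ : ζ = ξ sstar / o sstar)
    (b : Fin n → ℝ) (hb : ∀ s, b s = ξ s - ζ * o s) :
    ∀ s, ζ + b s = g s + ∑ s', P s s' * b s' :=
  stmt_16_general P g sstar ξ o hξ ho hopos ζ hζ b hb
end
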